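/- arXiv:2006.01477 — 3 statements merged into one kernel-verified Lean document; each statement's English description precedes it below -/
import Mathlib

section
/- Mutation invariance of the potential in the hypersurface case: with w, u±, S, S', F, F' as in the setup, and additional lattice vectors v_i with w(v_i) = 0, set W = Σ_{v∈S} z^v + Σ_{v∈S'} z^v + Σ_i z^{v_i}. Then the composition φ* = T*_{u⁺,u⁻} ∘ μ*_{-w,F'} ∘ μ*_{w,F} satisfies φ*(W) = W, where T_{u⁺,u⁻} is the integral reflection exchanging u⁺ and u⁻ and fixing w⊥. -/
/-!
Write `W = F z^{u⁺} + F' z^{u⁻} + R` with `R = ∑ᵢ z^{vᵢ}`. The Laurent polynomials `F`, `F'`, `R`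
only involve monomials of `w`-weight `0`, so all three maps fix them and only `z^{u±}` move:
`μ_{w,F}` turns `W` into `z^{u⁺} + F' z^{u⁻} F + R`, `μ_{-w,F'}` into `z^{u⁺} F' + z^{u⁻} F + R`,
and the reflection, which swaps `z^{u⁺}` and `z^{u⁻}`, gives back `W`.
-/

noncomputable section

/-- The ring of Laurent polynomials in `n` variables over `ℂ`, i.e. the group
algebra of the lattice `N ≅ ℤⁿ`. -/
abbrev LaurentPoly (n : ℕ) := AddMonoidAlgebra ℂ (Fin n → ℤ)

instance (n : ℕ) : IsDomain (LaurentPoly n) := NoZeroDivisors.to_isDomain _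

/-- The field of rational functions on the torus `T_N = (ℂ*)ⁿ`. -/
abbrev RatFn (n : ℕ) := FractionRing (LaurentPoly n)

/-- The Laurent monomial `z^v` attached to a lattice vector `v ∈ N`. -/
def mono (n : ℕ) (v : Fin n → ℤ) : RatFn n :=
  algebraMap (LaurentPoly n) (RatFn n) (AddMonoidAlgebra.single v 1)

/-- Applied with `φ, ψ, τ = μ*_{w,F}, μ*_{-w,F'}, T*_{u⁺,u⁻}`, `x = z^{u⁺}`, `y = z^{u⁻}`,
`A = F`, `B = F'` and `P` the span of the monomials of weight `0`. -/
theorem mutations_reflection_fix {K G : Type*} [Field K] [FunLike G K K] [RingHomClass G K K]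
    {φ ψ τ : G} {P : Set K} (hφP : ∀ a ∈ P, φ a = a) (hψP : ∀ a ∈ P, ψ a = a)
    (hτP : ∀ a ∈ P, τ a = a) {A B R x y : K} (hA : A ∈ P) (hB : B ∈ P) (hR : R ∈ P)
    (hA0 : A ≠ 0) (hB0 : B ≠ 0) (hφx : φ x = x * A⁻¹) (hφy : φ y = y * A)
    (hψx : ψ x = x * B) (hψy : ψ y = y * B⁻¹) (hτx : τ x = y) (hτy : τ y = x) :
    τ (ψ (φ (A * x + B * y + R))) = A * x + B * y + R := by
  have hφW : φ (A * x + B * y + R) = x + B * y * A + R := by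
    rw [map_add, map_add, map_mul, map_mul, hφP A hA, hφP B hB, hφP R hR, hφx, hφy]
    field_simp
  have hψW : ψ (x + B * y * A + R) = x * B + y * A + R := by
    rw [map_add, map_add, map_mul, map_mul, hψP A hA, hψP B hB, hψP R hR, hψx, hψy]
    field_simp
  rw [hφW, hψW, map_add, map_add, map_mul, map_mul, hτP A hA, hτP B hB, hτP R hR, hτx, hτy]
  ring

namespace LaurentPoly

variable {n : ℕ}

theorem mono_add (v v' : Fin n → ℤ) : mono n (v + v') = mono n v * mono n v' := by
  rw [mono, mono, mono, ← map_mul, AddMonoidAlgebra.single_mul_single, one_mul]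

theorem algebraMap_sum_single_one {ι : Type*} (s : Finset ι) (f : ι → Fin n → ℤ) :
    algebraMap (LaurentPoly n) (RatFn n) (∑ i ∈ s, AddMonoidAlgebra.single (f i) 1) =
      ∑ i ∈ s, mono n (f i) :=
  map_sum _ _ _

theorem sum_mono_ne_zero {T : Finset (Fin n → ℤ)} (hT : T.Nonempty) : ∑ v ∈ T, mono n v ≠ 0 := by
  obtain ⟨t, ht⟩ := hT
  have hcoeff : (∑ v ∈ T, AddMonoidAlgebra.single v (1 : ℂ)).coeff t = 1 := by
    simp [AddMonoidAlgebra.coeff_sum, Finsupp.single_apply, ht]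
  rw [← algebraMap_sum_single_one T fun v => v]
  refine (map_ne_zero_iff _ (IsFractionRing.injective (LaurentPoly n) (RatFn n))).mpr ?_
  intro h
  simp [h] at hcoeff

theorem sum_mono_eq_mul_mono (T : Finset (Fin n → ℤ)) (u : Fin n → ℤ) :
    ∑ v ∈ T, mono n v = (∑ v ∈ T, mono n (v - u)) * mono n u := by
  simp only [Finset.sum_mul, ← mono_add, sub_add_cancel]

theorem sum_mono_sub_ne_zero {T : Finset (Fin n → ℤ)} (hT : T.Nonempty) (u : Fin n → ℤ) :
    ∑ v ∈ T, mono n (v - u) ≠ 0 :=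
  left_ne_zero_of_mul (sum_mono_eq_mul_mono T u ▸ sum_mono_ne_zero hT)

def weightZeroSpan (w : (Fin n → ℤ) →ₗ[ℤ] ℤ) : Submodule ℂ (RatFn n) :=
  Submodule.span ℂ (mono n '' LinearMap.ker w)

theorem weightZeroSpan_neg (w : (Fin n → ℤ) →ₗ[ℤ] ℤ) : weightZeroSpan (-w) = weightZeroSpan w := by
  rw [weightZeroSpan, weightZeroSpan, LinearMap.ker_neg]

theorem sum_mono_mem_weightZeroSpan {w : (Fin n → ℤ) →ₗ[ℤ] ℤ} {ι : Type*} (s : Finset ι)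
    (f : ι → Fin n → ℤ) (hf : ∀ i ∈ s, w (f i) = 0) :
    ∑ i ∈ s, mono n (f i) ∈ weightZeroSpan w :=
  Submodule.sum_mem _ fun i hi => Submodule.subset_span ⟨f i, hf i hi, rfl⟩

theorem sum_mono_sub_mem_weightZeroSpan {w : (Fin n → ℤ) →ₗ[ℤ] ℤ} {T : Finset (Fin n → ℤ)}
    {u : Fin n → ℤ} {c : ℤ} (hT : ∀ v ∈ T, w v = c) (hu : w u = c) :
    ∑ v ∈ T, mono n (v - u) ∈ weightZeroSpan w :=
  sum_mono_mem_weightZeroSpan T _ fun v hv => by rw [map_sub, hT v hv, hu, sub_self]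

theorem apply_eq_self_of_mem_weightZeroSpan {w : (Fin n → ℤ) →ₗ[ℤ] ℤ}
    {χ : RatFn n →ₐ[ℂ] RatFn n} (hχ : ∀ v, w v = 0 → χ (mono n v) = mono n v) {x : RatFn n}
    (hx : x ∈ weightZeroSpan w) : χ x = x :=
  (Submodule.span_le (p := LinearMap.eqLocus χ.toLinearMap LinearMap.id)).mpr
    (by rintro _ ⟨v, hv, rfl⟩; exact hχ v hv) hx

def IsMutation (w : (Fin n → ℤ) →ₗ[ℤ] ℤ) (F : RatFn n) (φ : RatFn n →ₐ[ℂ] RatFn n) : Prop :=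
  ∀ v, φ (mono n v) = mono n v * F ^ (-(w v))

namespace IsMutation

variable {w : (Fin n → ℤ) →ₗ[ℤ] ℤ} {F : RatFn n} {φ : RatFn n →ₐ[ℂ] RatFn n}

theorem apply_of_mem_weightZeroSpan (h : IsMutation w F φ) {x : RatFn n}
    (hx : x ∈ weightZeroSpan w) : φ x = x :=
  apply_eq_self_of_mem_weightZeroSpan (fun v hv => by rw [h v, hv, neg_zero, zpow_zero, mul_one]) hx

theorem apply_mono_of_eq_one (h : IsMutation w F φ) {v : Fin n → ℤ} (hv : w v = 1) :
    φ (mono n v) = mono n v * F⁻¹ := by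
  rw [h v, hv, zpow_neg_one]

theorem apply_mono_of_eq_neg_one (h : IsMutation w F φ) {v : Fin n → ℤ} (hv : w v = -1) :
    φ (mono n v) = mono n v * F := by
  rw [h v, hv, neg_neg, zpow_one]

end IsMutation

def IsReflection (w : (Fin n → ℤ) →ₗ[ℤ] ℤ) (up um : Fin n → ℤ) (τ : RatFn n →ₐ[ℂ] RatFn n) :
    Prop :=
  ∀ v, τ (mono n v) = mono n (v - w v • (up - um))

namespace IsReflection

variable {w : (Fin n → ℤ) →ₗ[ℤ] ℤ} {up um : Fin n → ℤ} {τ : RatFn n →ₐ[ℂ] RatFn n}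

theorem apply_of_mem_weightZeroSpan (h : IsReflection w up um τ) {x : RatFn n}
    (hx : x ∈ weightZeroSpan w) : τ x = x :=
  apply_eq_self_of_mem_weightZeroSpan (fun v hv => by rw [h v, hv, zero_smul, sub_zero]) hx

theorem apply_mono_left (h : IsReflection w up um τ) (hup : w up = 1) :
    τ (mono n up) = mono n um := by
  rw [h, hup, one_smul, sub_sub_cancel]

theorem apply_mono_right (h : IsReflection w up um τ) (hum : w um = -1) :
    τ (mono n um) = mono n up := by
  rw [h, hum, neg_one_smul, sub_neg_eq_add, add_sub_cancel]

end IsReflection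

end LaurentPoly

open LaurentPoly

theorem mutation_invariance_hypersurface_general (n m : ℕ) (w : (Fin n → ℤ) →ₗ[ℤ] ℤ)
    (up um : Fin n → ℤ) (hup : w up = 1) (hum : w um = -1)
    (S S' : Finset (Fin n → ℤ))
    (hS : ∀ v ∈ S, w v = 1) (hS' : ∀ v ∈ S', w v = -1)
    (hSne : S.Nonempty) (hS'ne : S'.Nonempty)
    (v₀ : Fin m → (Fin n → ℤ)) (hv₀ : ∀ i, w (v₀ i) = 0)
    (φ ψ τ : RatFn n →ₐ[ℂ] RatFn n)
    (hφ : ∀ v, φ (mono n v) = mono n v *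
      (algebraMap (LaurentPoly n) (RatFn n)
        (∑ s ∈ S, AddMonoidAlgebra.single (s - up) (1 : ℂ))) ^ (-(w v)))
    (hψ : ∀ v, ψ (mono n v) = mono n v *
      (algebraMap (LaurentPoly n) (RatFn n)
        (∑ s ∈ S', AddMonoidAlgebra.single (s - um) (1 : ℂ))) ^ (w v))
    (hτ : ∀ v, τ (mono n v) = mono n (v - w v • (up - um))) :
    τ (ψ (φ (∑ v ∈ S, mono n v + ∑ v ∈ S', mono n v + ∑ i : Fin m, mono n (v₀ i)))) =
      ∑ v ∈ S, mono n v + ∑ v ∈ S', mono n v + ∑ i : Fin m, mono n (v₀ i) := by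
  rw [algebraMap_sum_single_one] at hφ hψ
  replace hψ : IsMutation (-w) _ ψ := fun v => by rw [hψ v, LinearMap.neg_apply, neg_neg]
  rw [sum_mono_eq_mul_mono S up, sum_mono_eq_mul_mono S' um]
  exact mutations_reflection_fix (P := weightZeroSpan w)
    (fun _ => IsMutation.apply_of_mem_weightZeroSpan hφ)
    (fun _ ha => hψ.apply_of_mem_weightZeroSpan (weightZeroSpan_neg w ▸ ha))
    (fun _ => IsReflection.apply_of_mem_weightZeroSpan hτ)
    (sum_mono_sub_mem_weightZeroSpan hS hup) (sum_mono_sub_mem_weightZeroSpan hS' hum)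
    (sum_mono_mem_weightZeroSpan _ _ fun i _ => hv₀ i)
    (sum_mono_sub_ne_zero hSne up) (sum_mono_sub_ne_zero hS'ne um)
    (IsMutation.apply_mono_of_eq_one hφ hup) (IsMutation.apply_mono_of_eq_neg_one hφ hum)
    (hψ.apply_mono_of_eq_neg_one (by simp [hup])) (hψ.apply_mono_of_eq_one (by simp [hum]))
    (IsReflection.apply_mono_left hτ hup) (IsReflection.apply_mono_right hτ hum)

/-- Mutation invariance of the potential in the hypersurface case: with
`W = ∑_{v∈S} z^v + ∑_{v∈S'} z^v + ∑ᵢ z^{vᵢ}` (where `w ≡ 1` on `S`, `w ≡ -1` on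
`S'` and `w(vᵢ) = 0`), the composition
`φ* = T*_{u⁺,u⁻} ∘ μ*_{-w,F'} ∘ μ*_{w,F}` satisfies `φ*(W) = W`.  Here `φ`, `ψ`
are the pullbacks of the mutations with factors `F = z^{-u⁺}∑_{v∈S} z^v`,
`F' = z^{-u⁻}∑_{v∈S'} z^v`, and `τ` is the pullback of the integral reflection
`v ↦ v - w(v)(u⁺ - u⁻)`. -/
theorem mutation_invariance_hypersurface (n m : ℕ) (w : (Fin n → ℤ) →ₗ[ℤ] ℤ)
    (up um : Fin n → ℤ) (hup : w up = 1) (hum : w um = -1)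
    (S S' : Finset (Fin n → ℤ)) (hdisj : Disjoint S S')
    (hS : ∀ v ∈ S, w v = 1) (hS' : ∀ v ∈ S', w v = -1)
    (hSne : S.Nonempty) (hS'ne : S'.Nonempty)
    (v₀ : Fin m → (Fin n → ℤ)) (hv₀ : ∀ i, w (v₀ i) = 0)
    (φ ψ τ : RatFn n →ₐ[ℂ] RatFn n)
    (hφ : ∀ v, φ (mono n v) = mono n v *
      (algebraMap (LaurentPoly n) (RatFn n)
        (∑ s ∈ S, AddMonoidAlgebra.single (s - up) (1 : ℂ))) ^ (-(w v)))
    (hψ : ∀ v, ψ (mono n v) = mono n v *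
      (algebraMap (LaurentPoly n) (RatFn n)
        (∑ s ∈ S', AddMonoidAlgebra.single (s - um) (1 : ℂ))) ^ (w v))
    (hτ : ∀ v, τ (mono n v) = mono n (v - w v • (up - um))) :
    τ (ψ (φ (∑ v ∈ S, mono n v + ∑ v ∈ S', mono n v + ∑ i : Fin m, mono n (v₀ i)))) =
      ∑ v ∈ S, mono n v + ∑ v ∈ S', mono n v + ∑ i : Fin m, mono n (v₀ i) :=
  mutation_invariance_hypersurface_general n m w up um hup hum S S' hS hS' hSne hS'ne v₀ hv₀ φ ψ τ
    hφ hψ hτ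
end
end

section
/- Evaluation lemma for concatenated factor products: let w_1, ..., w_c ∈ M be weight vectors, {S_i}, {S'_i} partitions of ray-generator indices such that w_i(v_j) = 1 if j ∈ S_i \ S'_i, w_i(v_j) = -1 if j ∈ S'_i \ S_i, and w_i(v_j) = 0 otherwise, and u⁺_j ∈ N vectors with w_a(u⁺_j) = δ_{aj}. For a sequence (a_1, ..., a_p), let P = z^{u⁺_{a_1}}·∏_{k=1}^{p-1} [a_k, a_{k+1}], where [i,j] = z^{-u⁺_i} Σ_{k ∈ S_i ∩ S'_j} z^{v_k}. Then for any index i > max(a_2, ..., a_{p-1}), every exponent u of a monomial of P satisfies: ⟨w_i, u⟩ = 1 if a_1 = i and a_p ≠ i; ⟨w_i, u⟩ = -1 if a_1 ≠ i and a_p = i; and ⟨w_i, u⟩ = 0 otherwise. -/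
/-!
Each exponent `v_{b_k} - u⁺_{a_k}` pairs with `w_i` to `-[a_{k+1} = i]`: since the `S_j` are
disjoint, `b_k ∈ S_i` exactly when `a_k = i`, which cancels against `w_i(u⁺_{a_k})`, and likewise
`b_k ∈ S'_i` exactly when `a_{k+1} = i`. As `i` exceeds every interior vertex, only `k = p - 1`
contributes to the sum, while the leading factor `z^{u⁺_{a_0}}` contributes `[a_0 = i]`.
-/

open Function

theorem ite_and_not_eq_ite_sub_ite {A : Type*} [Ring A] (P Q : Prop) [Decidable P] [Decidable Q] :
    (if P ∧ ¬Q then (1 : A) else if Q ∧ ¬P then -1 else 0) =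
      (if P then 1 else 0) - (if Q then 1 else 0) := by
  by_cases P <;> by_cases Q <;> simp [*]

theorem Finset.mem_iff_eq_of_pairwise_disjoint {ι α : Type*} {S : ι → Finset α}
    (hS : Pairwise (Disjoint on S)) {x : α} {i j : ι} (hx : x ∈ S j) : x ∈ S i ↔ j = i :=
  ⟨fun h => by_contra fun hne => Finset.disjoint_left.mp (hS hne) hx h, fun h => h ▸ hx⟩

theorem Fin.sum_succ_eq_last_of_eq_zero {M : Type*} [AddCommMonoid M] {p : ℕ} (hp : 0 < p)
    (g : Fin (p + 1) → M) (hg : ∀ k, k ≠ 0 → k ≠ Fin.last p → g k = 0) :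
    ∑ k : Fin p, g k.succ = g (Fin.last p) := by
  obtain ⟨q, rfl⟩ : ∃ q, p = q + 1 := ⟨p - 1, by omega⟩
  rw [Fin.sum_univ_castSucc, Fin.succ_last, Finset.sum_eq_zero, zero_add]
  intro k _
  exact hg _ (Fin.succ_ne_zero _) (Fin.succ_castSucc k ▸ (Fin.castSucc_lt_last _).ne)

theorem weight_sub_up_eq_neg_ite {N : Type*} [AddCommGroup N] [Module ℤ N] {R c : ℕ}
    {v : Fin R → N} {S S' : Fin (c + 1) → Finset (Fin R)}
    (hSdisj : Pairwise (Disjoint on S)) (hS'disj : Pairwise (Disjoint on S'))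
    {w : Fin c → N →ₗ[ℤ] ℤ}
    (hw : ∀ (i : Fin c) (k : Fin R), w i (v k) =
      if k ∈ S i.castSucc ∧ k ∉ S' i.castSucc then 1
      else if k ∈ S' i.castSucc ∧ k ∉ S i.castSucc then -1 else 0)
    {up : Fin c → N} (hu : ∀ a j : Fin c, w a (up j) = if a = j then 1 else 0)
    (i j : Fin c) {l : Fin (c + 1)} {b : Fin R} (hbS : b ∈ S j.castSucc) (hbS' : b ∈ S' l) :
    w i (v b - up j) = -(if l = i.castSucc then 1 else 0) := by
  simp only [map_sub, hw, hu, ite_and_not_eq_ite_sub_ite,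
    Finset.mem_iff_eq_of_pairwise_disjoint hSdisj hbS,
    Finset.mem_iff_eq_of_pairwise_disjoint hS'disj hbS', Fin.castSucc_inj]
  by_cases hij : j = i
  · simp [hij]
  · simp [hij, Ne.symm hij]

theorem evaluation_lemma_general (n R c p : ℕ) (hp : 0 < p)
    (v : Fin R → (Fin n → ℤ))
    (S S' : Fin (c + 1) → Finset (Fin R))
    (hSdisj : ∀ i j, i ≠ j → Disjoint (S i) (S j))
    (hS'disj : ∀ i j, i ≠ j → Disjoint (S' i) (S' j))
    (w : Fin c → ((Fin n → ℤ) →ₗ[ℤ] ℤ))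
    (hw : ∀ (i : Fin c) (k : Fin R), w i (v k) =
      if k ∈ S i.castSucc ∧ k ∉ S' i.castSucc then 1
      else if k ∈ S' i.castSucc ∧ k ∉ S i.castSucc then -1 else 0)
    (up : Fin c → (Fin n → ℤ))
    (hu : ∀ a j : Fin c, w a (up j) = if a = j then 1 else 0)
    (a : Fin (p + 1) → Fin (c + 1)) (a' : Fin p → Fin c)
    (ha' : ∀ k : Fin p, (a' k).castSucc = a k.castSucc)
    (i : Fin c)
    (hi : ∀ k : Fin (p + 1), k ≠ 0 → k ≠ Fin.last p → (a k : ℕ) < (i : ℕ))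
    (b : Fin p → Fin R)
    (hb : ∀ k : Fin p, b k ∈ S (a k.castSucc) ∧ b k ∈ S' (a k.succ)) :
    w i (up (a' ⟨0, hp⟩) + ∑ k : Fin p, (v (b k) - up (a' k))) =
      (if a 0 = i.castSucc then 1 else 0) -
      (if a (Fin.last p) = i.castSucc then 1 else 0) := by
  have hfirst : w i (up (a' ⟨0, hp⟩)) = if a 0 = i.castSucc then 1 else 0 := by
    have h0 : a 0 = (a' ⟨0, hp⟩).castSucc := (ha' ⟨0, hp⟩).symm
    simp only [hu, h0, Fin.castSucc_inj, @eq_comm _ i]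
  have hfactor (k : Fin p) :
      w i (v (b k) - up (a' k)) = -(if a k.succ = i.castSucc then 1 else 0) :=
    weight_sub_up_eq_neg_ite hSdisj hS'disj hw hu i (a' k) ((ha' k).symm ▸ (hb k).1) (hb k).2
  have hlast := Fin.sum_succ_eq_last_of_eq_zero hp
    (fun k => if a k = i.castSucc then (1 : ℤ) else 0)
    fun k hk0 hklast => if_neg fun h => (hi k hk0 hklast).ne (by rw [h, Fin.val_castSucc])
  rw [map_add, map_sum, hfirst, Finset.sum_congr rfl fun k _ => hfactor k, Finset.sum_neg_distrib,
    hlast, sub_eq_add_neg]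

/-- Evaluation lemma for concatenated factor products (Lemma 3.6 of the paper):
with partitions `{Sᵢ}`, `{S'ᵢ}` of `{1, …, R}`, weight vectors `wᵢ`, and auxiliary
vectors `u⁺ⱼ` with `w_a(u⁺ⱼ) = δ_{aj}`, consider a sequence `a₀, …, a_p` (of
vertices; `a₀, …, a_{p-1}` given by `a'` avoid the last vertex so that `u⁺` is
defined there).  A monomial of `P = z^{u⁺_{a₀}} ∏ₖ [aₖ, aₖ₊₁]`, where
`[i,j] = z^{-u⁺ᵢ} ∑_{k ∈ Sᵢ ∩ S'ⱼ} z^{v_k}`, has exponent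
`u = u⁺_{a₀} + ∑ₖ (v_{bₖ} - u⁺_{aₖ})` for a choice `bₖ ∈ S_{aₖ} ∩ S'_{aₖ₊₁}`.
If `i` exceeds all interior entries `a₁, …, a_{p-1}`, then `⟨wᵢ, u⟩` equals `1`
if `a₀ = i` and `a_p ≠ i`, `-1` if `a₀ ≠ i` and `a_p = i`, and `0` otherwise. -/
theorem evaluation_lemma (n R c p : ℕ) (hp : 0 < p)
    (v : Fin R → (Fin n → ℤ))
    (S S' : Fin (c + 1) → Finset (Fin R))
    (hSdisj : ∀ i j, i ≠ j → Disjoint (S i) (S j))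
    (hS'disj : ∀ i j, i ≠ j → Disjoint (S' i) (S' j))
    (hScov : ∀ k, ∃ i, k ∈ S i)
    (hS'cov : ∀ k, ∃ i, k ∈ S' i)
    (w : Fin c → ((Fin n → ℤ) →ₗ[ℤ] ℤ))
    (hw : ∀ (i : Fin c) (k : Fin R), w i (v k) =
      if k ∈ S i.castSucc ∧ k ∉ S' i.castSucc then 1
      else if k ∈ S' i.castSucc ∧ k ∉ S i.castSucc then -1 else 0)
    (up : Fin c → (Fin n → ℤ))
    (hu : ∀ a j : Fin c, w a (up j) = if a = j then 1 else 0)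
    (a : Fin (p + 1) → Fin (c + 1)) (a' : Fin p → Fin c)
    (ha' : ∀ k : Fin p, (a' k).castSucc = a k.castSucc)
    (i : Fin c)
    (hi : ∀ k : Fin (p + 1), k ≠ 0 → k ≠ Fin.last p → (a k : ℕ) < (i : ℕ))
    (b : Fin p → Fin R)
    (hb : ∀ k : Fin p, b k ∈ S (a k.castSucc) ∧ b k ∈ S' (a k.succ)) :
    w i (up (a' ⟨0, hp⟩) + ∑ k : Fin p, (v (b k) - up (a' k))) =
      (if a 0 = i.castSucc then 1 else 0) -
      (if a (Fin.last p) = i.castSucc then 1 else 0) :=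
  evaluation_lemma_general n R c p hp v S S' hSdisj hS'disj w hw up hu a a' ha' i hi b hb
end

section
/- Hilly concatenation: if (a_2, ..., a_{p-1}) is a hilly sequence all of whose entries are at most j, and (b_2, ..., b_{q-1}) is a hilly sequence all of whose entries are at most j, then the concatenated sequence (a_2, ..., a_{p-1}, j+1, b_2, ..., b_{q-1}) is hilly. -/
/-! Peel off the left sequence one entry at a time. A sequence `a :: l` is hilly iff `l` is and
every later copy of `a` is preceded (within `l`) by something larger than `a`; for the first entry of
the left part, a later copy lies either in the left part itself, where its hilliness applies, or past
the peak `j + 1`, which exceeds it. -/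

/-- A finite sequence of positive integers is *hilly* if whenever two entries at
positions `i < j` are equal, some entry at a position `k` with `i ≤ k ≤ j`
strictly exceeds their common value. -/
def Hilly (l : List ℕ) : Prop :=
  ∀ i j : Fin l.length, i < j → l.get i = l.get j →
    ∃ k : Fin l.length, i ≤ k ∧ k ≤ j ∧ l.get i < l.get k

theorem hilly_iff_getElem {l : List ℕ} :
    Hilly l ↔ ∀ i j (hij : i < j) (hj : j < l.length), l[i] = l[j] →
      ∃ k, ∃ _ : k ≤ j, i ≤ k ∧ l[i] < l[k] := by
  constructor
  · intro h i j hij hj heq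
    obtain ⟨k, hik, hkj, hlt⟩ := h ⟨i, by omega⟩ ⟨j, hj⟩ hij heq
    exact ⟨k, hkj, hik, hlt⟩
  · intro h i j hij heq
    obtain ⟨k, hkj, hik, hlt⟩ := h i j hij j.isLt heq
    exact ⟨⟨k, by omega⟩, hik, hkj, hlt⟩

theorem hilly_cons_iff {a : ℕ} {l : List ℕ} :
    Hilly (a :: l) ↔ Hilly l ∧ ∀ j (hj : j < l.length), a = l[j] →
      ∃ k, ∃ _ : k ≤ j, a < l[k] := by
  simp only [hilly_iff_getElem]
  constructor
  · intro h
    refine ⟨fun i j hij hj heq => ?_, fun j hj heq => ?_⟩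
    · obtain ⟨_ | k, hkj, hik, hlt⟩ := h (i + 1) (j + 1) (by omega) (by simpa) heq
      · omega
      · exact ⟨k, by omega, by omega, hlt⟩
    · obtain ⟨_ | k, hkj, -, hlt⟩ := h 0 (j + 1) (by omega) (by simpa) heq
      · exact absurd hlt (lt_irrefl a)
      · exact ⟨k, by omega, hlt⟩
  · rintro ⟨hl, ha⟩ (_ | i) (_ | j) hij hj heq
    · omega
    · obtain ⟨k, hkj, hlt⟩ := ha j (by simpa using hj) heq
      exact ⟨k + 1, by omega, by omega, hlt⟩
    · omega
    · obtain ⟨k, hkj, hik, hlt⟩ := hl i j (by omega) (by simpa using hj) heq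
      exact ⟨k + 1, by omega, by omega, hlt⟩

theorem hilly_append_cons {l₁ l₂ : List ℕ} {m : ℕ} (h₁ : Hilly l₁) (h₂ : Hilly l₂)
    (hlt₁ : ∀ x ∈ l₁, x < m) (hlt₂ : ∀ x ∈ l₂, x < m) : Hilly (l₁ ++ m :: l₂) := by
  induction l₁ with
  | nil =>
    refine hilly_cons_iff.2 ⟨h₂, fun j hj heq => ?_⟩
    exact absurd (hlt₂ _ (List.getElem_mem hj)) (heq ▸ lt_irrefl m)
  | cons x l₁ ih =>
    obtain ⟨h₁, hx⟩ := hilly_cons_iff.1 h₁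
    rw [List.cons_append]
    refine hilly_cons_iff.2 ⟨ih h₁ fun y hy => hlt₁ y (.tail x hy), fun j hj heq => ?_⟩
    by_cases hjl : j < l₁.length
    · rw [List.getElem_append_left hjl] at heq
      obtain ⟨k, hkj, hlt⟩ := hx j hjl heq
      exact ⟨k, hkj, by rwa [List.getElem_append_left (by omega)]⟩
    · -- the peak `m` separates `x` from every later entry
      refine ⟨l₁.length, by omega, ?_⟩
      simpa using hlt₁ x (.head l₁)

theorem hilly_concat_general (j : ℕ) (l₁ l₂ : List ℕ)
    (h₁ : Hilly l₁) (h₂ : Hilly l₂)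
    (hb₁ : ∀ x ∈ l₁, x ≤ j) (hb₂ : ∀ x ∈ l₂, x ≤ j) :
    Hilly (l₁ ++ (j + 1) :: l₂) :=
  hilly_append_cons h₁ h₂ (fun x hx => Nat.lt_succ_of_le (hb₁ x hx))
    (fun x hx => Nat.lt_succ_of_le (hb₂ x hx))

/-- Hilly concatenation: if `l₁` and `l₂` are hilly sequences all of whose entries
are at most `j`, then the concatenation `l₁ ++ [j+1] ++ l₂` is hilly. -/
theorem hilly_concat (j : ℕ) (l₁ l₂ : List ℕ)
    (hpos₁ : ∀ x ∈ l₁, 0 < x) (hpos₂ : ∀ x ∈ l₂, 0 < x)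
    (h₁ : Hilly l₁) (h₂ : Hilly l₂)
    (hb₁ : ∀ x ∈ l₁, x ≤ j) (hb₂ : ∀ x ∈ l₂, x ≤ j) :
    Hilly (l₁ ++ (j + 1) :: l₂) :=
  hilly_concat_general j l₁ l₂ h₁ h₂ hb₁ hb₂
end
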